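/- arXiv:1003.2475 — 2 statements merged into one kernel-verified Lean document; each statement's English description precedes it below -/
import Mathlib

section
/- Define ⟨Y, Z⟩_* := Σ_{E} ⟨Z y_E, y_E⟩ ⟨Y y_E, y_E⟩, where the sum ranges over the six edges of the canonical simplex in ℝ³ with edge direction vectors y_E ∈ {e_1, e_2, e_3, e_1+e_2, e_1+e_3, e_2+e_3}. Then ⟨·,·⟩_* is an inner product on the space of symmetric 3×3 real matrices: it is bilinear, symmetric, nonnegative on the diagonal, and ⟨Z, Z⟩_* = 0 implies Z = 0. -/
open Matrix

/-- The six edge direction vectors of the canonical simplex in ℝ³. -/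
def edgeVecs : Fin 6 → (Fin 3 → ℝ) :=
  ![![1, 0, 0], ![0, 1, 0], ![0, 0, 1], ![1, 1, 0], ![1, 0, 1], ![0, 1, 1]]

/-- The bilinear form `⟨Y, Z⟩_* = Σ_E ⟨Z y_E, y_E⟩⟨Y y_E, y_E⟩`. -/
noncomputable def starForm (Y Z : Matrix (Fin 3) (Fin 3) ℝ) : ℝ :=
  ∑ i : Fin 6, (Z.mulVec (edgeVecs i) ⬝ᵥ edgeVecs i) * (Y.mulVec (edgeVecs i) ⬝ᵥ edgeVecs i)

lemma ev0 : edgeVecs 0 = ![1,0,0] := rfl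
lemma ev1 : edgeVecs 1 = ![0,1,0] := rfl
lemma ev2 : edgeVecs 2 = ![0,0,1] := rfl
lemma ev3 : edgeVecs 3 = ![1,1,0] := rfl
lemma ev4 : edgeVecs 4 = ![1,0,1] := rfl
lemma ev5 : edgeVecs 5 = ![0,1,1] := rfl

lemma starForm_expand (Y Z : Matrix (Fin 3) (Fin 3) ℝ) :
    starForm Y Z =
      Z 0 0 * Y 0 0 + Z 1 1 * Y 1 1 + Z 2 2 * Y 2 2 +
      (Z 0 0 + Z 0 1 + Z 1 0 + Z 1 1) * (Y 0 0 + Y 0 1 + Y 1 0 + Y 1 1) +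
      (Z 0 0 + Z 0 2 + Z 2 0 + Z 2 2) * (Y 0 0 + Y 0 2 + Y 2 0 + Y 2 2) +
      (Z 1 1 + Z 1 2 + Z 2 1 + Z 2 2) * (Y 1 1 + Y 1 2 + Y 2 1 + Y 2 2) := by
  simp [starForm, Fin.sum_univ_six, ev0, ev1, ev2, ev3, ev4, ev5, mulVec, dotProduct,
    Fin.sum_univ_three]
  ring

theorem starForm_is_inner_product :
    (∀ Y Z : Matrix (Fin 3) (Fin 3) ℝ, starForm Y Z = starForm Z Y) ∧
    (∀ Y₁ Y₂ Z : Matrix (Fin 3) (Fin 3) ℝ,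
      starForm (Y₁ + Y₂) Z = starForm Y₁ Z + starForm Y₂ Z) ∧
    (∀ (c : ℝ) (Y Z : Matrix (Fin 3) (Fin 3) ℝ), starForm (c • Y) Z = c * starForm Y Z) ∧
    (∀ Z : Matrix (Fin 3) (Fin 3) ℝ, 0 ≤ starForm Z Z) ∧
    (∀ Z : Matrix (Fin 3) (Fin 3) ℝ, Z.IsSymm → starForm Z Z = 0 → Z = 0) := by
  refine ⟨?_, ?_, ?_, ?_, ?_⟩
  · intro Y Z; simp only [starForm_expand]; ring
  · intro Y₁ Y₂ Z; simp only [starForm_expand, Matrix.add_apply]; ring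
  · intro c Y Z; simp only [starForm_expand, Matrix.smul_apply, smul_eq_mul]; ring
  · intro Z
    apply Finset.sum_nonneg
    intro i _
    exact mul_self_nonneg _
  · intro Z hsymm h
    rw [starForm_expand] at h
    have h01 : Z 1 0 = Z 0 1 := by
      have := congrFun (congrFun hsymm 1) 0
      simpa [Matrix.transpose_apply] using this.symm
    have h02 : Z 2 0 = Z 0 2 := by
      have := congrFun (congrFun hsymm 2) 0
      simpa [Matrix.transpose_apply] using this.symm
    have h12 : Z 2 1 = Z 1 2 := by
      have := congrFun (congrFun hsymm 2) 1
      simpa [Matrix.transpose_apply] using this.symm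
    rw [h01, h02, h12] at h
    obtain ⟨e00, e11, e22, e01, e02, e12⟩ :
        Z 0 0 = 0 ∧ Z 1 1 = 0 ∧ Z 2 2 = 0 ∧ Z 0 1 = 0 ∧ Z 0 2 = 0 ∧ Z 1 2 = 0 := by
      have n1 := mul_self_nonneg (Z 0 0)
      have n2 := mul_self_nonneg (Z 1 1)
      have n3 := mul_self_nonneg (Z 2 2)
      have n4 := mul_self_nonneg (Z 0 0 + Z 0 1 + Z 0 1 + Z 1 1)
      have n5 := mul_self_nonneg (Z 0 0 + Z 0 2 + Z 0 2 + Z 2 2)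
      have n6 := mul_self_nonneg (Z 1 1 + Z 1 2 + Z 1 2 + Z 2 2)
      have z1 : Z 0 0 = 0 := mul_self_eq_zero.mp (by linarith)
      have z2 : Z 1 1 = 0 := mul_self_eq_zero.mp (by linarith)
      have z3 : Z 2 2 = 0 := mul_self_eq_zero.mp (by linarith)
      have z4 : Z 0 0 + Z 0 1 + Z 0 1 + Z 1 1 = 0 := mul_self_eq_zero.mp (by linarith)
      have z5 : Z 0 0 + Z 0 2 + Z 0 2 + Z 2 2 = 0 := mul_self_eq_zero.mp (by linarith)
      have z6 : Z 1 1 + Z 1 2 + Z 1 2 + Z 2 2 = 0 := mul_self_eq_zero.mp (by linarith)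
      exact ⟨z1, z2, z3, by linarith, by linarith, by linarith⟩
    ext i j
    fin_cases i <;> fin_cases j <;>
      simp only [Matrix.zero_apply] <;>
      first
        | exact e00 | exact e11 | exact e22 | exact e01 | exact e02 | exact e12
        | exact h01.trans e01 | exact h02.trans e02 | exact h12.trans e12
end

section
/- Let T be a nondegenerate simplex in ℝ^d and let u : T → ℝ^d be an affine vector field with constant symmetric gradient ε. Define the quadratic function u_G(x) = (1/h)(⟨ε x, x⟩ − I(⟨ε x, x⟩)(x)), where I denotes the affine interpolant at the vertices of T and h > 0. Then u_G ≡ 0 on T if and only if ⟨ε (x_i − x_j), x_i − x_j⟩ = 0 for all edges (i,j) of T. -/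
open Matrix Finset

lemma mulVec_sum' {d n : ℕ} (ε : Matrix (Fin d) (Fin d) ℝ) (g : Fin n → Fin d → ℝ) :
    ε.mulVec (∑ i, g i) = ∑ i, ε.mulVec (g i) := by
  funext k
  simp only [Matrix.mulVec, dotProduct, Finset.sum_apply, Finset.mul_sum]
  exact Finset.sum_comm

lemma sum_dotProduct' {d n : ℕ} (f : Fin n → Fin d → ℝ) (v : Fin d → ℝ) :
    (∑ i, f i) ⬝ᵥ v = ∑ i, f i ⬝ᵥ v := by
  simp only [dotProduct, Finset.sum_apply, Finset.sum_mul]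
  exact Finset.sum_comm

lemma dotProduct_sum' {d n : ℕ} (v : Fin d → ℝ) (f : Fin n → Fin d → ℝ) :
    v ⬝ᵥ (∑ i, f i) = ∑ i, v ⬝ᵥ f i := by
  rw [dotProduct_comm, sum_dotProduct']
  simp [dotProduct_comm]

lemma key_identity {d : ℕ} (ε : Matrix (Fin d) (Fin d) ℝ) (hε : ε.IsSymm)
    (x : Fin (d + 1) → (Fin d → ℝ)) (w : Fin (d + 1) → ℝ) (hw : ∑ i, w i = 1) :
    ε.mulVec (∑ i, w i • x i) ⬝ᵥ (∑ i, w i • x i) - ∑ i, w i * (ε.mulVec (x i) ⬝ᵥ x i)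
      = -(1/2) * ∑ i, ∑ j, w i * w j * (ε.mulVec (x i - x j) ⬝ᵥ (x i - x j)) := by
  have hsymm : ∀ u v : Fin d → ℝ, ε.mulVec u ⬝ᵥ v = ε.mulVec v ⬝ᵥ u := by
    intro u v
    rw [dotProduct_comm, Matrix.dotProduct_mulVec, ← Matrix.mulVec_transpose, hε.eq,
      dotProduct_comm]
  have hquad : ε.mulVec (∑ i, w i • x i) ⬝ᵥ (∑ i, w i • x i)
      = ∑ i, ∑ j, w i * w j * (ε.mulVec (x i) ⬝ᵥ x j) := by
    rw [mulVec_sum', sum_dotProduct']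
    refine Finset.sum_congr rfl fun i _ => ?_
    rw [dotProduct_sum']
    refine Finset.sum_congr rfl fun j _ => ?_
    simp [Matrix.mulVec_smul, smul_dotProduct, dotProduct_smul, smul_eq_mul]
    ring
  have hdiff : ∀ i j, ε.mulVec (x i - x j) ⬝ᵥ (x i - x j)
      = (ε.mulVec (x i) ⬝ᵥ x i) + (ε.mulVec (x j) ⬝ᵥ x j)
        - 2 * (ε.mulVec (x i) ⬝ᵥ x j) := by
    intro i j
    rw [Matrix.mulVec_sub, sub_dotProduct, dotProduct_sub, dotProduct_sub,
      hsymm (x j) (x i)]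
    ring
  have e0 : ∑ i, ∑ j, w i * w j * (ε.mulVec (x i - x j) ⬝ᵥ (x i - x j))
      = (∑ i, ∑ j, w i * w j * (ε.mulVec (x i) ⬝ᵥ x i))
        + (∑ i, ∑ j, w i * w j * (ε.mulVec (x j) ⬝ᵥ x j))
        - 2 * ∑ i, ∑ j, w i * w j * (ε.mulVec (x i) ⬝ᵥ x j) := by
    rw [Finset.mul_sum, ← Finset.sum_add_distrib, ← Finset.sum_sub_distrib]
    refine Finset.sum_congr rfl fun i _ => ?_
    rw [Finset.mul_sum, ← Finset.sum_add_distrib, ← Finset.sum_sub_distrib]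
    refine Finset.sum_congr rfl fun j _ => ?_
    rw [hdiff i j]; ring
  have e1 : ∑ i, ∑ j, w i * w j * (ε.mulVec (x i) ⬝ᵥ x i)
      = ∑ i, w i * (ε.mulVec (x i) ⬝ᵥ x i) := by
    refine Finset.sum_congr rfl fun i _ => ?_
    have : ∑ j, w i * w j * (ε.mulVec (x i) ⬝ᵥ x i)
        = (w i * (ε.mulVec (x i) ⬝ᵥ x i)) * ∑ j, w j := by
      rw [Finset.mul_sum]
      exact Finset.sum_congr rfl fun j _ => by ring
    rw [this, hw, mul_one]
  have e2 : ∑ i, ∑ j, w i * w j * (ε.mulVec (x j) ⬝ᵥ x j)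
      = ∑ i, w i * (ε.mulVec (x i) ⬝ᵥ x i) := by
    rw [Finset.sum_comm]
    refine Finset.sum_congr rfl fun j _ => ?_
    have : ∑ i, w i * w j * (ε.mulVec (x j) ⬝ᵥ x j)
        = (w j * (ε.mulVec (x j) ⬝ᵥ x j)) * ∑ i, w i := by
      rw [Finset.mul_sum]
      exact Finset.sum_congr rfl fun i _ => by ring
    rw [this, hw, mul_one]
  rw [hquad, e0, e1, e2]
  ring

lemma sum_two_smul {n d : ℕ} {i j : Fin n} (hij : i ≠ j) (f : Fin n → Fin d → ℝ) :
    ∑ k, (if k = i then (1/2 : ℝ) else if k = j then 1/2 else 0) • f k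
      = (1/2 : ℝ) • f i + (1/2 : ℝ) • f j := by
  rw [← Finset.sum_subset (Finset.subset_univ ({i, j} : Finset (Fin n)))
      (fun k _ hk => by
        simp only [Finset.mem_insert, Finset.mem_singleton, not_or] at hk
        simp [hk.1, hk.2])]
  rw [Finset.sum_pair hij]
  simp [hij, hij.symm]

lemma sum_two {n : ℕ} {i j : Fin n} (hij : i ≠ j) (f : Fin n → ℝ) :
    ∑ k, (if k = i then (1/2 : ℝ) else if k = j then 1/2 else 0) * f k
      = (1/2) * f i + (1/2) * f j := by
  rw [← Finset.sum_subset (Finset.subset_univ ({i, j} : Finset (Fin n)))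
      (fun k _ hk => by
        simp only [Finset.mem_insert, Finset.mem_singleton, not_or] at hk
        simp [hk.1, hk.2])]
  rw [Finset.sum_pair hij]
  simp [hij, hij.symm]

theorem uG_vanishes_iff_edge_quantities_vanish (d : ℕ) (h : ℝ) (hh : 0 < h)
    (x : Fin (d + 1) → (Fin d → ℝ)) (hx : AffineIndependent ℝ x)
    (lam : Fin (d + 1) → (Fin d → ℝ) → ℝ)
    (hvert : ∀ i j, lam i (x j) = if i = j then (1 : ℝ) else 0)
    (hsum : ∀ p : Fin d → ℝ, ∑ i, lam i p = 1)
    (hrep : ∀ p : Fin d → ℝ, ∑ i, lam i p • x i = p)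
    (ε : Matrix (Fin d) (Fin d) ℝ) (hε : ε.IsSymm) :
    (∀ p ∈ convexHull ℝ (Set.range x),
        (1 / h) * (ε.mulVec p ⬝ᵥ p - ∑ i, lam i p * (ε.mulVec (x i) ⬝ᵥ x i)) = 0) ↔
      ∀ i j, ε.mulVec (x i - x j) ⬝ᵥ (x i - x j) = 0 := by
  constructor
  · intro H i j
    by_cases hij : i = j
    · subst hij; simp
    · set w : Fin (d + 1) → ℝ :=
        fun k => if k = i then (1/2 : ℝ) else if k = j then 1/2 else 0 with hwdef
      have hw1 : ∑ k, w k = 1 := by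
        have h2 := sum_two hij (fun _ => (1 : ℝ))
        simp only [mul_one] at h2
        simp only [hwdef]
        rw [h2]; norm_num
      set p : Fin d → ℝ := ∑ k, w k • x k with hpdef
      have hpmem : p ∈ convexHull ℝ (Set.range x) := by
        have hx2 : ∀ k, x k ∈ convexHull ℝ (Set.range x) :=
          fun k => subset_convexHull ℝ _ ⟨k, rfl⟩
        have hp2 : p = (1/2 : ℝ) • x i + (1/2 : ℝ) • x j := by
          rw [hpdef, hwdef]
          exact sum_two_smul hij x
        rw [hp2]
        exact (convex_convexHull ℝ (Set.range x)) (hx2 i) (hx2 j)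
          (by norm_num) (by norm_num) (by norm_num)
      -- lam at p equals w
      have hlam : (fun k => lam k p) = w := by
        refine (affineIndependent_iff_eq_of_fintype_affineCombination_eq ℝ x).mp hx
          (fun k => lam k p) w (hsum p) hw1 ?_
        rw [Finset.affineCombination_eq_linear_combination _ _ _ (hsum p),
          Finset.affineCombination_eq_linear_combination _ _ _ hw1]
        rw [hrep p, hpdef]
      have key := key_identity ε hε x w hw1
      have hH := H p hpmem
      rw [show (∑ i, lam i p * (ε.mulVec (x i) ⬝ᵥ x i))
          = ∑ i, w i * (ε.mulVec (x i) ⬝ᵥ x i) from by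
        refine Finset.sum_congr rfl fun k _ => by rw [congrFun hlam k]] at hH
      rw [hpdef] at hH
      rw [key] at hH
      -- compute the double sum
      have hdouble : ∑ a, ∑ b, w a * w b * (ε.mulVec (x a - x b) ⬝ᵥ (x a - x b))
          = (1/2) * (ε.mulVec (x i - x j) ⬝ᵥ (x i - x j)) := by
        have hQ : ∀ a, ε.mulVec (x a - x a) ⬝ᵥ (x a - x a) = 0 := by
          intro a; simp
        have hQsym : ε.mulVec (x j - x i) ⬝ᵥ (x j - x i)
            = ε.mulVec (x i - x j) ⬝ᵥ (x i - x j) := by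
          rw [show x j - x i = -(x i - x j) from (neg_sub (x i) (x j)).symm,
            Matrix.mulVec_neg, neg_dotProduct, dotProduct_neg, neg_neg]
        have inner : ∀ a, ∑ b, w a * w b * (ε.mulVec (x a - x b) ⬝ᵥ (x a - x b))
            = w a * ((1/2) * (ε.mulVec (x a - x i) ⬝ᵥ (x a - x i))
              + (1/2) * (ε.mulVec (x a - x j) ⬝ᵥ (x a - x j))) := by
          intro a
          rw [← sum_two hij (fun b => (ε.mulVec (x a - x b) ⬝ᵥ (x a - x b))), Finset.mul_sum]
          exact Finset.sum_congr rfl fun b _ => by simp only [hwdef]; ring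
        rw [show (∑ a, ∑ b, w a * w b * (ε.mulVec (x a - x b) ⬝ᵥ (x a - x b)))
            = ∑ a, w a * ((1/2) * (ε.mulVec (x a - x i) ⬝ᵥ (x a - x i))
              + (1/2) * (ε.mulVec (x a - x j) ⬝ᵥ (x a - x j))) from
          Finset.sum_congr rfl fun a _ => inner a]
        rw [hwdef]
        rw [sum_two hij (fun a => (1/2) * (ε.mulVec (x a - x i) ⬝ᵥ (x a - x i))
              + (1/2) * (ε.mulVec (x a - x j) ⬝ᵥ (x a - x j)))]
        rw [hQ i, hQ j, hQsym]
        ring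
      rw [hdouble] at hH
      rcases mul_eq_zero.mp hH with h1 | h2
      · exact absurd h1 (one_div_ne_zero hh.ne')
      · linarith
  · intro H p hp
    have key := key_identity ε hε x (fun i => lam i p) (hsum p)
    rw [hrep p] at key
    rw [key]
    simp [H]
end
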